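/- If x lies in a unique maximal solvable subalgebra M of a finite-dimensional Lie algebra L, then sol_L(x) = M, and in particular sol_L(x) is a subalgebra of L. -/

import Mathlib

/-- The solvabilizer of `x` in `L`: elements `y` such that the Lie subalgebra
generated by `x` and `y` is solvable. -/
def solvabilizer (R : Type*) {L : Type*} [CommRing R] [LieRing L] [LieAlgebra R L]
    (x : L) : Set L :=
  {y | LieAlgebra.IsSolvable (LieSubalgebra.lieSpan R L {x, y})}

/-- The solvabilizer of `L`: elements `x` such that for every `h ∈ L` the Lie
subalgebra generated by `h` and `x` is solvable. -/
def solSet (R L : Type*) [CommRing R] [LieRing L] [LieAlgebra R L] : Set L :=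
  {x | ∀ h : L, LieAlgebra.IsSolvable (LieSubalgebra.lieSpan R L {h, x})}

/-
A solvable subalgebra lies in a maximal solvable one (subalgebras satisfy the ascending chain
condition), so `y ∈ sol_L(x)` exactly when `x` and `y` lie in a common maximal solvable
subalgebra. If `M` is the only maximal solvable subalgebra containing `x`, that common subalgebra
must be `M`.
-/

theorem LieSubalgebra.isSolvable_of_le {R L : Type*} [CommRing R] [LieRing L] [LieAlgebra R L]
    {K N : LieSubalgebra R L} (h : K ≤ N) (hN : LieAlgebra.IsSolvable N) :
    LieAlgebra.IsSolvable K :=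
  (LieSubalgebra.inclusion_injective h).lieAlgebra_isSolvable

theorem mem_solvabilizer_iff_exists_maximal {R L : Type*} [CommRing R] [LieRing L]
    [LieAlgebra R L] [IsNoetherian R L] {x y : L} :
    y ∈ solvabilizer R x ↔ ∃ N : LieSubalgebra R L,
      Maximal (fun N : LieSubalgebra R L => LieAlgebra.IsSolvable N) N ∧ x ∈ N ∧ y ∈ N := by
  constructor
  · intro hy
    obtain ⟨N, hle, hN⟩ := exists_maximal_ge_of_wellFoundedGT
      (fun N : LieSubalgebra R L => LieAlgebra.IsSolvable N) _ hy
    exact ⟨N, hN, Set.pair_subset_iff.mp (LieSubalgebra.lieSpan_le.mp hle)⟩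
  · rintro ⟨N, hN, hxN, hyN⟩
    exact LieSubalgebra.isSolvable_of_le
      (LieSubalgebra.lieSpan_le.mpr (Set.pair_subset_iff.mpr ⟨hxN, hyN⟩)) hN.prop

theorem stmt9 (F L : Type*) [Field F] [LieRing L] [LieAlgebra F L] [FiniteDimensional F L]
    (x : L) (M : LieSubalgebra F L)
    (hM : Maximal (fun N : LieSubalgebra F L => LieAlgebra.IsSolvable N) M) (hxM : x ∈ M)
    (huniq : ∀ N : LieSubalgebra F L,
      Maximal (fun N : LieSubalgebra F L => LieAlgebra.IsSolvable N) N → x ∈ N → N = M) :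
    solvabilizer F x = (M : Set L) := by
  ext y
  rw [mem_solvabilizer_iff_exists_maximal]
  constructor
  · rintro ⟨N, hN, hxN, hyN⟩
    rwa [huniq N hN hxN] at hyN
  · exact fun hy => ⟨M, hM, hxM, hy⟩
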